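/- Fix an index j. The extreme points (vertices) of IP_{ϖ_j} are exactly the following points: ϖ_j itself, together with the points ϖ_j − Σ_{i ∈ I} c_i α_i, where I ranges over the connected subsets of {1, …, r} containing j and (c_i)_{i ∈ I} is the unique tuple of rationals satisfying Σ_{i ∈ I} c_i ⟨α_i, α_k^∨⟩ = δ_{jk} for all k ∈ I (i.e., the j-th column of the inverse transpose of the Cartan matrix of the subsystem on I). -/

import Mathlib

/-!
Write `μ = ϖ_j - ∑ c_i α_i`. Then `IP_{ϖ_j}` is the polyhedron `c_i ≥ 0`, `⟨μ, α_k^∨⟩ ≥ 0`, so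
`μ` is a vertex iff no nonzero direction keeps its active constraints tight: no `v ≠ 0` in the
span of `{α_i : c_i ≠ 0}` with `⟨v, α_k^∨⟩ = 0` whenever `⟨μ, α_k^∨⟩ = 0`.

Averaging over the finite Weyl group gives an invariant inner product. For it every principal
Cartan submatrix `A_I` is nondegenerate and obeys the sign rule `A_I c ≥ 0 → c ≥ 0`. Let `I` be the
support of `c`. If `⟨μ, α_k^∨⟩ > 0` for some `k ∈ I`, solving `A_I e = δ_k` gives a tight nonzero
direction. Hence `A_I c = δ_j`, so `j ∈ I` unless `μ = ϖ_j`, and `I` is connected: a part of `I`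
not joined to `j` carries a homogeneous system, which forces `c = 0` there. Conversely, the sign
rule and connectedness make a solution on `I ∋ j` strictly positive, and then nondegeneracy of
`A_I` makes the point a vertex.
-/

/-- The intersection polytope `IP_lam`: the set of dominant weights `μ` such that
`lam - μ` is a nonnegative rational combination of the simple roots. -/
def IP {V : Type*} [AddCommGroup V] [Module ℚ V] {r : ℕ}
    (b : Fin r → V) (coroot : Fin r → Module.Dual ℚ V) (lam : V) : Set V :=
  {μ | (∀ i, 0 ≤ coroot i μ) ∧
    ∃ c : Fin r → ℚ, (∀ i, 0 ≤ c i) ∧ lam - μ = ∑ i, c i • b i}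

open Module Submodule

section Polyhedron

variable {𝕜 V ι : Type*} [Field 𝕜] [LinearOrder 𝕜] [IsStrictOrderedRing 𝕜]
  [AddCommGroup V] [Module 𝕜 V]

lemma exists_pos_forall_mul_abs_le [Finite ι] {g h : ι → 𝕜} (hg : ∀ i, 0 ≤ g i)
    (hgh : ∀ i, g i = 0 → h i = 0) : ∃ ε > 0, ∀ i, ε * |h i| ≤ g i := by
  let δ : ι → 𝕜 := fun i => if h i = 0 then 1 else g i / |h i|
  have hδpos : ∀ i, 0 < δ i := fun i => by
    by_cases hi : h i = 0
    · simp [δ, hi]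
    · simp only [δ, if_neg hi]
      exact div_pos ((hg i).lt_of_ne fun h0 => hi (hgh i h0.symm)) (abs_pos.2 hi)
  have hδ : ∀ i, δ i * |h i| ≤ g i := fun i => by
    by_cases hi : h i = 0
    · simp [hi, hg i]
    · simp only [δ, if_neg hi]
      rw [div_mul_cancel₀ _ (abs_ne_zero.2 hi)]
  cases isEmpty_or_nonempty ι with
  | inl _ => exact ⟨1, one_pos, isEmptyElim⟩
  | inr _ =>
    obtain ⟨i₀, hi₀⟩ := Finite.exists_min δ
    exact ⟨δ i₀, hδpos i₀, fun i =>
      (mul_le_mul_of_nonneg_right (hi₀ i) (abs_nonneg _)).trans (hδ i)⟩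

theorem mem_extremePoints_setOf_forall_le_iff [Finite ι] (f : ι → Dual 𝕜 V) (a : ι → 𝕜)
    {x : V} :
    x ∈ {y | ∀ i, f i y ≤ a i}.extremePoints 𝕜 ↔
      (∀ i, f i x ≤ a i) ∧ ∀ v, (∀ i, f i x = a i → f i v = 0) → v = 0 := by
  rw [mem_extremePoints_iff_left]
  refine and_congr_right fun hx => ⟨fun hext v hv => ?_, fun hvert y hy z hz hxyz => ?_⟩
  · obtain ⟨ε, hε, hεv⟩ := exists_pos_forall_mul_abs_le (g := fun i => a i - f i x)
      (h := fun i => f i v) (fun i => sub_nonneg.2 (hx i))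
      (fun i hi => hv i (sub_eq_zero.1 hi).symm)
    have hmem : ∀ s : 𝕜, |s| ≤ ε → ∀ i, f i (x + s • v) ≤ a i := fun s hs i => by
      have : s * f i v ≤ ε * |f i v| := (le_abs_self _).trans
        (by rw [abs_mul]; exact mul_le_mul_of_nonneg_right hs (abs_nonneg _))
      simp only [map_add, map_smul, smul_eq_mul]
      linarith [hεv i]
    have hseg : x ∈ openSegment 𝕜 (x + ε • v) (x + (-ε) • v) :=
      ⟨1 / 2, 1 / 2, by norm_num, by norm_num, by norm_num, by module⟩
    have := hext _ (hmem ε (abs_of_pos hε).le) _ (hmem (-ε) (by rw [abs_neg, abs_of_pos hε])) hseg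
    exact (smul_eq_zero.1 (add_eq_left.1 this)).resolve_left hε.ne'
  · obtain ⟨s, t, hs, ht, hst, rfl⟩ := hxyz
    refine (sub_eq_zero.1 (hvert _ fun i hi => ?_)).symm
    have hfi : s * f i y + t * f i z = (s + t) * a i := by
      rw [hst, one_mul, ← hi]; simp
    have hyi : f i y = a i := by nlinarith [hy i, hz i]
    rw [map_sub, hyi, hi, sub_self]

end Polyhedron

lemma SimpleGraph.Reachable.mem_of_forall_adj {W : Type*} {G : SimpleGraph W} {S : Set W}
    (hS : ∀ u v, G.Adj u v → u ∈ S → v ∈ S) {u v : W} (h : G.Reachable u v) (hu : u ∈ S) :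
    v ∈ S := by
  obtain ⟨p⟩ := h
  induction p with
  | nil => exact hu
  | cons hadj _ ih => exact ih (hS _ _ hadj hu)

section CorootForm

variable {𝕜 V ι : Type*} [Field 𝕜] [LinearOrder 𝕜] [AddCommGroup V] [Module 𝕜 V]
  {α : ι → V} {coroot : ι → Dual 𝕜 V}

def dynkinGraph (α : ι → V) (coroot : ι → Dual 𝕜 V) : SimpleGraph ι :=
  SimpleGraph.fromRel fun a c => coroot c (α a) ≠ 0

/-- The coroots are those of the inner product `B`: `⟨x, α_k^∨⟩ = 2 B(x, α_k) / B(α_k, α_k)`. -/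
structure IsCorootForm (B : LinearMap.BilinForm 𝕜 V) (α : ι → V) (coroot : ι → Dual 𝕜 V) :
    Prop where
  isSymm : B.IsSymm
  pos : ∀ x, x ≠ 0 → 0 < B x x
  apply_root : ∀ k x, B x (α k) = B (α k) (α k) / 2 * coroot k x

lemma mul_coroot_nonpos [IsStrictOrderedRing 𝕜] (hoff : ∀ i k, i ≠ k → coroot k (α i) ≤ 0)
    {I : Finset ι} {c : ι → 𝕜} {k : ι} (hc : ∀ i ∈ I, 0 ≤ c i) (hk : k ∈ I → c k = 0) :
    ∀ i ∈ I, c i * coroot k (α i) ≤ 0 := fun i hi => by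
  obtain rfl | hik := eq_or_ne i k
  · simp [hk hi]
  · exact mul_nonpos_of_nonneg_of_nonpos (hc i hi) (hoff i k hik)

lemma ne_and_mul_coroot_eq_zero [IsStrictOrderedRing 𝕜] [DecidableEq ι]
    (hoff : ∀ i k, i ≠ k → coroot k (α i) ≤ 0) {I : Finset ι} {c : ι → 𝕜} {j k : ι}
    (hc : ∀ i ∈ I, 0 ≤ c i) (hk : k ∈ I → c k = 0)
    (h : coroot k (∑ i ∈ I, c i • α i) = if j = k then 1 else 0) :
    j ≠ k ∧ ∀ i ∈ I, c i * coroot k (α i) = 0 := by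
  have hterms := mul_coroot_nonpos hoff hc hk
  simp only [map_sum, map_smul, smul_eq_mul] at h
  have hjk : j ≠ k := fun hjk => by
    have := Finset.sum_nonpos hterms
    rw [h, if_pos hjk] at this
    exact absurd this (by norm_num)
  exact ⟨hjk, (Finset.sum_eq_zero_iff_of_nonpos hterms).1 (by rw [h, if_neg hjk])⟩

namespace IsCorootForm

variable {B : LinearMap.BilinForm 𝕜 V}

lemma eq_zero_of_mem_span (hB : IsCorootForm B α coroot) {s : Set ι} {v : V}
    (hv : v ∈ span 𝕜 (α '' s)) (h : ∀ k ∈ s, coroot k v = 0) : v = 0 := by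
  have hker : span 𝕜 (α '' s) ≤ LinearMap.ker (B v) := span_le.2 <| by
    rintro _ ⟨k, hk, rfl⟩
    rw [SetLike.mem_coe, LinearMap.mem_ker, hB.apply_root, h k hk, mul_zero]
  by_contra hne
  exact (hB.pos v hne).ne' (hker hv)

lemma exists_mem_span_coroot_eq (hB : IsCorootForm B α coroot) (hα : LinearIndependent 𝕜 α)
    (I : Finset ι) (t : ι → 𝕜) : ∃ v ∈ span 𝕜 (α '' ↑I), ∀ k ∈ I, coroot k v = t k := by
  set L := Fintype.linearCombination 𝕜 (α ∘ Subtype.val : I → V)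
  have hL : LinearMap.range L = span 𝕜 (α '' ↑I) := by
    rw [Fintype.range_linearCombination, Set.range_comp, Subtype.range_coe]
  let T : (I → 𝕜) →ₗ[𝕜] (I → 𝕜) := LinearMap.pi (fun k : I => coroot k) ∘ₗ L
  have hT : Function.Injective T := by
    refine (injective_iff_map_eq_zero T).2 fun e he => ?_
    have hLe := hB.eq_zero_of_mem_span (hL ▸ LinearMap.mem_range_self L e)
      fun k hk => congrFun he ⟨k, hk⟩
    exact linearIndependent_iff_injective_fintypeLinearCombination.1
      (hα.comp _ Subtype.val_injective) (hLe.trans (map_zero L).symm)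
  obtain ⟨e, he⟩ := LinearMap.injective_iff_surjective.1 hT fun k => t k
  exact ⟨L e, hL ▸ LinearMap.mem_range_self L e, fun k hk => congrFun he ⟨k, hk⟩⟩

lemma nonneg_of_coroot_nonneg [IsStrictOrderedRing 𝕜] (hB : IsCorootForm B α coroot)
    (hoff : ∀ i k, i ≠ k → coroot k (α i) ≤ 0) (hα : LinearIndependent 𝕜 α) {I : Finset ι}
    {c : ι → 𝕜} (h : ∀ k ∈ I, 0 ≤ coroot k (∑ i ∈ I, c i • α i)) : ∀ i ∈ I, 0 ≤ c i := by
  set p : ι → 𝕜 := fun i => max (c i) 0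
  set n : ι → 𝕜 := fun i => max (-c i) 0
  set v := ∑ i ∈ I, c i • α i
  set vp := ∑ i ∈ I, p i • α i
  set vn := ∑ i ∈ I, n i • α i
  have hv : v = vp - vn := by
    simp only [v, vp, vn, ← Finset.sum_sub_distrib, ← sub_smul, p, n,
      max_zero_sub_max_neg_zero_eq_self]
  have hd : ∀ k, 0 ≤ B (α k) (α k) / 2 := fun k =>
    div_nonneg (hB.pos _ (hα.ne_zero k)).le zero_le_two
  have hBvn : ∀ w, B w vn = ∑ k ∈ I, n k * (B (α k) (α k) / 2 * coroot k w) := fun w => by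
    simp only [vn, map_sum, map_smul, smul_eq_mul, ← hB.apply_root]
  have hv_vn : 0 ≤ B v vn := by
    rw [hBvn]
    exact Finset.sum_nonneg fun k hk => mul_nonneg (le_max_right _ _) (mul_nonneg (hd k) (h k hk))
  -- `B(vp, vn) ≤ 0` since the positive and negative parts of `c` have disjoint supports
  have hvp_vn : B vp vn ≤ 0 := by
    rw [hBvn]
    refine Finset.sum_nonpos fun k hk => ?_
    rcases eq_or_ne (n k) 0 with hnk | hnk
    · rw [hnk, zero_mul]
    have hpk : p k = 0 := max_eq_right <| by
      by_contra! hck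
      exact hnk (max_eq_right (by linarith))
    have : coroot k vp ≤ 0 := by
      simp only [vp, map_sum, map_smul, smul_eq_mul]
      exact Finset.sum_nonpos (mul_coroot_nonpos hoff (fun i _ => le_max_right _ _) fun _ => hpk)
    exact mul_nonpos_of_nonneg_of_nonpos (le_max_right _ _)
      (mul_nonpos_of_nonneg_of_nonpos (hd k) this)
  have hvn : vn = 0 := by
    by_contra hne
    have : B vn vn = B vp vn - B v vn := by rw [hv, map_sub, LinearMap.sub_apply, sub_sub_cancel]
    linarith [hB.pos vn hne]
  intro i hi
  have := linearIndependent_iff'.1 hα I n hvn i hi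
  simpa [n] using this

lemma coroot_eq_zero_comm [IsStrictOrderedRing 𝕜] (hB : IsCorootForm B α coroot)
    (hα : ∀ i, α i ≠ 0) (i k : ι) : coroot k (α i) = 0 ↔ coroot i (α k) = 0 := by
  have hd : ∀ i, B (α i) (α i) / 2 ≠ 0 := fun i => div_ne_zero (hB.pos _ (hα i)).ne' two_ne_zero
  rw [← mul_eq_zero_iff_left (hd k), ← hB.apply_root, hB.isSymm.eq, hB.apply_root,
    mul_eq_zero_iff_left (hd i)]

lemma dynkinGraph_adj [IsStrictOrderedRing 𝕜] (hB : IsCorootForm B α coroot)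
    (hα : ∀ i, α i ≠ 0) {i k : ι} :
    (dynkinGraph α coroot).Adj i k ↔ i ≠ k ∧ coroot k (α i) ≠ 0 := by
  simp only [dynkinGraph, SimpleGraph.fromRel_adj, ne_eq, hB.coroot_eq_zero_comm hα k i, or_self]

lemma pos_of_connected [IsStrictOrderedRing 𝕜] [DecidableEq ι] (hB : IsCorootForm B α coroot)
    (hoff : ∀ i k, i ≠ k → coroot k (α i) ≤ 0) (hα : LinearIndependent 𝕜 α) {I : Finset ι}
    {j : ι} (hj : j ∈ I) (hconn : ((dynkinGraph α coroot).induce ↑I).Connected) {c : ι → 𝕜}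
    (hc : ∀ k ∈ I, coroot k (∑ i ∈ I, c i • α i) = if j = k then 1 else 0) :
    ∀ i ∈ I, 0 < c i := by
  have hnn := hB.nonneg_of_coroot_nonneg hoff hα fun k hk => by
    rw [hc k hk]; split_ifs <;> norm_num
  have hzero : ∀ k ∈ I, c k = 0 → j ≠ k ∧ ∀ i ∈ I, c i * coroot k (α i) = 0 :=
    fun k hk hck => ne_and_mul_coroot_eq_zero hoff hnn (fun _ => hck) (hc k hk)
  have hS : ∀ u v : (I : Set ι), ((dynkinGraph α coroot).induce ↑I).Adj u v → c u = 0 → c v = 0 :=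
    fun u v huv hu => (mul_eq_zero.1 ((hzero u u.2 hu).2 v v.2)).resolve_right
      ((hB.dynkinGraph_adj hα.ne_zero).1 huv.symm).2
  intro i hi
  refine (hnn i hi).lt_of_ne fun hci => ?_
  have := (hconn.preconnected ⟨i, hi⟩ ⟨j, hj⟩).mem_of_forall_adj
    (S := {u : (I : Set ι) | c u = 0}) hS hci.symm
  exact (hzero j hj this).1 rfl

lemma connected_of_coroot_eq [DecidableEq ι] (hB : IsCorootForm B α coroot)
    (hα : LinearIndependent 𝕜 α) {I : Finset ι} {j : ι} (hj : j ∈ I) {c : ι → 𝕜} (hc₀ : ∀ i ∈ I, c i ≠ 0)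
    (hc : ∀ k ∈ I, coroot k (∑ i ∈ I, c i • α i) = if j = k then 1 else 0) :
    ((dynkinGraph α coroot).induce ↑I).Connected := by
  classical
  set G := (dynkinGraph α coroot).induce (↑I : Set ι)
  let R : ι → Prop := fun i => ∃ hi : i ∈ I, G.Reachable ⟨j, hj⟩ ⟨i, hi⟩
  set D := I.filter (¬ R ·)
  have hDR : ∀ k ∈ D, ∀ i ∈ I.filter R, coroot k (α i) = 0 := by
    intro k hk i hi
    obtain ⟨hkI, hkR⟩ := Finset.mem_filter.1 hk
    obtain ⟨hiI, ⟨_, hji⟩⟩ := Finset.mem_filter.1 hi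
    by_contra hA
    have hik : i ≠ k := by rintro rfl; exact hkR ⟨hiI, hji⟩
    have hadj : G.Adj ⟨i, hiI⟩ ⟨k, hkI⟩ := by
      simp only [G, SimpleGraph.induce_adj, dynkinGraph, SimpleGraph.fromRel_adj]
      exact ⟨hik, Or.inl hA⟩
    exact hkR ⟨hkI, hji.trans hadj.reachable⟩
  have hvD : ∑ i ∈ D, c i • α i = 0 := by
    refine hB.eq_zero_of_mem_span (s := ↑D)
      (sum_mem fun i hi => smul_mem _ _ (subset_span ⟨i, hi, rfl⟩)) fun k hk => ?_
    have hjk : j ≠ k := by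
      rintro rfl; exact (Finset.mem_filter.1 hk).2 ⟨hj, SimpleGraph.Reachable.refl _⟩
    have := hc k (Finset.mem_filter.1 hk).1
    rw [← Finset.sum_filter_not_add_sum_filter I R, map_add, if_neg hjk] at this
    have hR : coroot k (∑ i ∈ I.filter R, c i • α i) = 0 := by
      simp only [map_sum, map_smul, smul_eq_mul]
      exact Finset.sum_eq_zero fun i hi => by rw [hDR k hk i hi, mul_zero]
    rwa [hR, add_zero] at this
  have hD : D = ∅ := Finset.eq_empty_of_forall_notMem fun i hi =>
    hc₀ i (Finset.mem_filter.1 hi).1 (linearIndependent_iff'.1 hα D c hvD i hi)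
  refine (SimpleGraph.connected_iff_exists_forall_reachable _).2 ⟨⟨j, hj⟩, fun ⟨k, hk⟩ => ?_⟩
  by_contra hkR
  have : k ∈ D := Finset.mem_filter.2 ⟨hk, fun ⟨_, h⟩ => hkR h⟩
  simp [hD] at this

end IsCorootForm
end CorootForm

section WeylGroup

variable {𝕜 V ι : Type*} [CommRing 𝕜] [AddCommGroup V] [Module 𝕜 V]
  {α : ι → V} {coroot : ι → Dual 𝕜 V}

def weylGroup (hdiag : ∀ i, coroot i (α i) = 2) : Subgroup (V ≃ₗ[𝕜] V) :=
  Subgroup.closure (Set.range fun i => reflection (hdiag i))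

lemma mapsTo_of_mem_weylGroup {hdiag : ∀ i, coroot i (α i) = 2} {Φ : Set V}
    (hΦ : ∀ β ∈ Φ, ∀ i, β - coroot i β • α i ∈ Φ) {w : V ≃ₗ[𝕜] V} (hw : w ∈ weylGroup hdiag) :
    Set.MapsTo w Φ Φ := by
  induction hw using Subgroup.closure_induction'' with
  | mem _ h | inv_mem _ h =>
    obtain ⟨i, rfl⟩ := h
    exact fun β hβ => by simpa [Module.reflection_apply] using hΦ β hβ i
  | one => exact Set.mapsTo_id Φ
  | mul _ _ _ _ hx hy => exact hx.comp hy

lemma finite_weylGroup (b : Basis ι 𝕜 V) {coroot : ι → Dual 𝕜 V}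
    (hdiag : ∀ i, coroot i (b i) = 2) {Φ : Set V} (hΦfin : Φ.Finite) (hΦroot : ∀ i, b i ∈ Φ)
    (hΦ : ∀ β ∈ Φ, ∀ i, β - coroot i β • b i ∈ Φ) : Finite (weylGroup hdiag) := by
  have := hΦfin.to_subtype
  refine Finite.of_injective (fun w : weylGroup hdiag => (mapsTo_of_mem_weylGroup hΦ w.2).restrict)
    fun w₁ w₂ h => Subtype.ext (LinearEquiv.toLinearMap_injective (b.ext fun i => ?_))
  simpa using congrArg Subtype.val (congrFun h ⟨b i, hΦroot i⟩)

end WeylGroup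

section Reflection

variable {𝕜 V : Type*} [Field 𝕜] [CharZero 𝕜] [AddCommGroup V] [Module 𝕜 V]

lemma Module.apply_eq_mul_of_reflection_invariant {x : V} {f : Dual 𝕜 V} (h : f x = 2)
    {B : LinearMap.BilinForm 𝕜 V} (hB : ∀ y z, B (reflection h y) (reflection h z) = B y z)
    (y : V) : B y x = B x x / 2 * f y := by
  have hfix : reflection h (y - (f y / 2) • x) = y - (f y / 2) • x := by
    rw [Module.reflection_apply]; simp [h]
  have hperp : B (y - (f y / 2) • x) x = 0 := by
    have := hB (y - (f y / 2) • x) x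
    rw [hfix, Module.reflection_apply_self, map_neg] at this
    exact CharZero.eq_neg_self_iff.1 this.symm
  simp only [map_sub, map_smul, LinearMap.sub_apply, LinearMap.smul_apply, smul_eq_mul] at hperp
  linear_combination hperp

end Reflection

section InvariantForm

variable {𝕜 V ι : Type*} [Field 𝕜] [LinearOrder 𝕜] [IsStrictOrderedRing 𝕜]
  [AddCommGroup V] [Module 𝕜 V]

lemma Module.Basis.exists_isSymm_pos_form [Fintype ι] (b : Basis ι 𝕜 V) :
    ∃ B : LinearMap.BilinForm 𝕜 V, B.IsSymm ∧ ∀ x, x ≠ 0 → 0 < B x x := by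
  refine ⟨∑ i, (LinearMap.mul 𝕜 𝕜).compl₁₂ (b.coord i) (b.coord i), ⟨fun x y => ?_⟩,
    fun x hx => ?_⟩
  · simp only [LinearMap.sum_apply, LinearMap.compl₁₂_apply, LinearMap.mul_apply', mul_comm]
  · obtain ⟨i, hi⟩ : ∃ i, b.repr x i ≠ 0 := by
      by_contra! h
      exact hx (b.repr.injective (Finsupp.ext h |>.trans (map_zero _).symm))
    simp only [LinearMap.sum_apply, LinearMap.compl₁₂_apply, LinearMap.mul_apply',
      Basis.coord_apply]
    exact Finset.sum_pos' (fun i _ => mul_self_nonneg _) ⟨i, Finset.mem_univ _, mul_self_pos.2 hi⟩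

lemma exists_isSymm_pos_form_invariant (G : Subgroup (V ≃ₗ[𝕜] V)) [Finite G]
    {B₀ : LinearMap.BilinForm 𝕜 V} (hB₀ : B₀.IsSymm) (hB₀pos : ∀ x, x ≠ 0 → 0 < B₀ x x) :
    ∃ B : LinearMap.BilinForm 𝕜 V, B.IsSymm ∧ (∀ x, x ≠ 0 → 0 < B x x) ∧
      ∀ g ∈ G, ∀ x y, B (g x) (g y) = B x y := by
  have := Fintype.ofFinite G
  have hB : ∀ x y, (∑ g : G, B₀.compl₁₂ (g : V →ₗ[𝕜] V) (g : V →ₗ[𝕜] V)) x y =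
      ∑ g : G, B₀ (g.1 x) (g.1 y) := fun x y => by
    simp only [LinearMap.sum_apply, LinearMap.compl₁₂_apply, LinearEquiv.coe_coe]
  refine ⟨∑ g : G, B₀.compl₁₂ (g : V →ₗ[𝕜] V) (g : V →ₗ[𝕜] V), ⟨fun x y => ?_⟩,
    fun x hx => ?_, fun g hg x y => ?_⟩
  · simp only [hB, hB₀.eq]
  · rw [hB]
    exact Finset.sum_pos' (fun g _ => (hB₀pos _ (g.1.map_ne_zero_iff.2 hx)).le)
      ⟨1, Finset.mem_univ _, hB₀pos x hx⟩
  · simp only [hB]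
    exact Fintype.sum_equiv (Equiv.mulRight ⟨g, hg⟩) _ _ fun _ => rfl

lemma exists_isCorootForm [Fintype ι] (b : Basis ι 𝕜 V) {coroot : ι → Dual 𝕜 V}
    (hdiag : ∀ i, coroot i (b i) = 2) {Φ : Set V} (hΦfin : Φ.Finite) (hΦroot : ∀ i, b i ∈ Φ)
    (hΦ : ∀ β ∈ Φ, ∀ i, β - coroot i β • b i ∈ Φ) : ∃ B, IsCorootForm B b coroot := by
  have := finite_weylGroup b hdiag hΦfin hΦroot hΦ
  obtain ⟨B₀, hB₀, hB₀pos⟩ := b.exists_isSymm_pos_form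
  obtain ⟨B, hB, hBpos, hBinv⟩ := exists_isSymm_pos_form_invariant (weylGroup hdiag) hB₀ hB₀pos
  exact ⟨B, hB, hBpos, fun k => Module.apply_eq_mul_of_reflection_invariant (hdiag k)
    (hBinv _ (Subgroup.subset_closure ⟨k, rfl⟩))⟩

end InvariantForm

section Basis

variable {R M ι : Type*} [CommSemiring R] [AddCommMonoid M] [Module R M] (b : Basis ι R M)

lemma Module.Basis.repr_sum_smul_apply [DecidableEq ι] (I : Finset ι) (c : ι → R) (k : ι) :
    b.repr (∑ i ∈ I, c i • b i) k = if k ∈ I then c k else 0 := by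
  simp [map_sum, Finsupp.single_apply]

lemma Module.Basis.sum_support_repr_smul (x : M) :
    ∑ i ∈ (b.repr x).support, b.repr x i • b i = x := by
  conv_rhs => rw [← b.linearCombination_repr x, Finsupp.linearCombination_apply, Finsupp.sum]

end Basis

section IntersectionPolytope

variable {V : Type*} [AddCommGroup V] [Module ℚ V] {r : ℕ} {b : Basis (Fin r) ℚ V}
  {coroot : Fin r → Dual ℚ V}

lemma mem_IP_iff {lam μ : V} :
    μ ∈ IP b coroot lam ↔ (∀ i, 0 ≤ coroot i μ) ∧ ∀ i, 0 ≤ b.repr (lam - μ) i := by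
  refine and_congr_right fun _ => ⟨fun ⟨c, hc, h⟩ i => ?_, fun h => ⟨_, h, (b.sum_repr _).symm⟩⟩
  rw [h, b.repr_sum_self]
  exact hc i

lemma mem_extremePoints_IP_iff {lam μ : V} :
    μ ∈ (IP b coroot lam).extremePoints ℚ ↔ μ ∈ IP b coroot lam ∧
      ∀ v ∈ span ℚ (b '' ↑(b.repr (lam - μ)).support),
        (∀ k, coroot k μ = 0 → coroot k v = 0) → v = 0 := by
  have hIP : IP b coroot lam = {x | ∀ i, Sum.elim (fun k => -coroot k) b.coord i x ≤
      Sum.elim (fun _ => (0 : ℚ)) (fun i => b.repr lam i) i} := by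
    ext x
    simp [mem_IP_iff, Sum.forall, sub_nonneg]
  rw [hIP, mem_extremePoints_setOf_forall_le_iff]
  refine and_congr Iff.rfl (forall_congr' fun v => ?_)
  simp only [Sum.forall, Sum.elim_inl, Sum.elim_inr, LinearMap.neg_apply, neg_eq_zero,
    Basis.coord_apply, Basis.mem_span_image]
  have hsupp : ↑(b.repr v).support ⊆ (↑(b.repr (lam - μ)).support : Set (Fin r)) ↔
      ∀ i, b.repr μ i = b.repr lam i → b.repr v i = 0 := by
    simp only [Set.subset_def, Finset.mem_coe, Finsupp.mem_support_iff, map_sub,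
      Finsupp.coe_sub, Pi.sub_apply, ne_eq, not_imp_not]
    exact forall_congr' fun i => by rw [sub_eq_zero, eq_comm]
  rw [hsupp, and_imp, imp.swap]

lemma self_mem_extremePoints_IP {lam : V} (hlam : ∀ i, 0 ≤ coroot i lam) :
    lam ∈ (IP b coroot lam).extremePoints ℚ := by
  simp [mem_extremePoints_IP_iff, mem_IP_iff, hlam]

variable {B : LinearMap.BilinForm ℚ V} {ϖ : V} {j : Fin r}

lemma sub_sum_mem_extremePoints_IP (hB : IsCorootForm B b coroot)
    (hoff : ∀ i k, i ≠ k → coroot k (b i) ≤ 0) (hϖ : ∀ k, coroot k ϖ = if j = k then 1 else 0)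
    {I : Finset (Fin r)} (hj : j ∈ I) (hconn : ((dynkinGraph b coroot).induce ↑I).Connected)
    {c : Fin r → ℚ} (hc : ∀ k ∈ I, coroot k (∑ i ∈ I, c i • b i) = if j = k then 1 else 0) :
    ϖ - ∑ i ∈ I, c i • b i ∈ (IP b coroot ϖ).extremePoints ℚ := by
  have hpos := hB.pos_of_connected hoff b.linearIndependent hj hconn hc
  have hsupp : (b.repr (ϖ - (ϖ - ∑ i ∈ I, c i • b i))).support = I := by
    ext i
    rw [sub_sub_cancel, Finsupp.mem_support_iff, b.repr_sum_smul_apply]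
    by_cases hi : i ∈ I <;> simp [hi, (hpos _ _).ne']
  have hμI : ∀ k ∈ I, coroot k (ϖ - ∑ i ∈ I, c i • b i) = 0 := fun k hk => by
    rw [map_sub, hϖ, hc k hk, sub_self]
  rw [mem_extremePoints_IP_iff, mem_IP_iff, hsupp]
  refine ⟨⟨fun k => ?_, fun i => ?_⟩,
    fun v hv hvk => hB.eq_zero_of_mem_span hv fun k hk => hvk k (hμI k hk)⟩
  · by_cases hk : k ∈ I
    · rw [hμI k hk]
    · rw [map_sub, hϖ, if_neg (ne_of_mem_of_not_mem hj hk), zero_sub, neg_nonneg]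
      simp only [map_sum, map_smul, smul_eq_mul]
      exact Finset.sum_nonpos (mul_coroot_nonpos hoff (fun i hi => (hpos i hi).le)
        fun hk' => absurd hk' hk)
  · rw [sub_sub_cancel, b.repr_sum_smul_apply]
    split_ifs with hi
    exacts [(hpos i hi).le, le_rfl]

lemma coroot_eq_zero_of_mem_extremePoints_IP (hB : IsCorootForm B b coroot)
    (hoff : ∀ i k, i ≠ k → coroot k (b i) ≤ 0) (hϖ : ∀ k, coroot k ϖ = if j = k then 1 else 0)
    {μ : V} (hμ : μ ∈ (IP b coroot ϖ).extremePoints ℚ) :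
    ∀ k ∈ (b.repr (ϖ - μ)).support, coroot k μ = 0 := by
  rw [mem_extremePoints_IP_iff, mem_IP_iff] at hμ
  obtain ⟨⟨-, hc⟩, hvert⟩ := hμ
  set I := (b.repr (ϖ - μ)).support
  have hpos : ∀ i ∈ I, 0 ≤ b.repr (ϖ - μ) i := fun i _ => hc i
  intro k₀ hk₀
  by_contra hne
  obtain ⟨v, hv, hvk⟩ := hB.exists_mem_span_coroot_eq b.linearIndependent I
    fun k => if k = k₀ then 1 else 0
  suffices v = 0 by simpa [this] using hvk k₀ hk₀
  refine hvert v hv fun k hk => ?_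
  by_cases hkI : k ∈ I
  · rw [hvk k hkI, if_neg]
    rintro rfl
    exact hne hk
  -- off the support, `⟨μ, α_k^∨⟩ = 0` forces `α_k^∨` to vanish on every root of the support
  have hcoroot := ne_and_mul_coroot_eq_zero hoff hpos (fun h => absurd h hkI)
    (by rw [b.sum_support_repr_smul, map_sub, hϖ, hk, sub_zero])
  have hker : span ℚ (b '' ↑I) ≤ LinearMap.ker (coroot k) := span_le.2 <| by
    rintro _ ⟨i, hi, rfl⟩
    exact (mul_eq_zero.1 (hcoroot.2 i hi)).resolve_left (Finsupp.mem_support_iff.1 hi)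
  exact hker hv

lemma eq_or_exists_of_mem_extremePoints_IP (hB : IsCorootForm B b coroot)
    (hoff : ∀ i k, i ≠ k → coroot k (b i) ≤ 0) (hϖ : ∀ k, coroot k ϖ = if j = k then 1 else 0)
    {μ : V} (hμ : μ ∈ (IP b coroot ϖ).extremePoints ℚ) :
    μ = ϖ ∨ ∃ I : Finset (Fin r), j ∈ I ∧ ((dynkinGraph b coroot).induce ↑I).Connected ∧
      ∃ c : Fin r → ℚ, (∀ k ∈ I, coroot k (∑ i ∈ I, c i • b i) = if j = k then 1 else 0) ∧
        μ = ϖ - ∑ i ∈ I, c i • b i := by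
  have hzero := coroot_eq_zero_of_mem_extremePoints_IP hB hoff hϖ hμ
  set c := b.repr (ϖ - μ)
  set I := c.support
  have hc : ∀ k ∈ I, coroot k (ϖ - μ) = if j = k then 1 else 0 := fun k hk => by
    rw [map_sub, hϖ, hzero k hk, sub_zero]
  by_cases hj : j ∈ I
  · rw [← b.sum_support_repr_smul (ϖ - μ)] at hc
    refine Or.inr ⟨I, hj, hB.connected_of_coroot_eq b.linearIndependent hj
      (fun i hi => Finsupp.mem_support_iff.1 hi) hc, c, hc, ?_⟩
    rw [b.sum_support_repr_smul, sub_sub_cancel]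
  · refine Or.inl (sub_eq_zero.1 (hB.eq_zero_of_mem_span (b.mem_span_image.2 subset_rfl)
      fun k hk => ?_)).symm
    rw [hc k hk, if_neg (ne_of_mem_of_not_mem hk hj).symm]

end IntersectionPolytope

theorem stmt_16_general {V : Type*} [AddCommGroup V] [Module ℚ V] {r : ℕ}
    (b : Module.Basis (Fin r) ℚ V) (coroot : Fin r → Module.Dual ℚ V)
    (hdiag : ∀ i, coroot i (b i) = 2)
    (hoff : ∀ i j : Fin r, i ≠ j → coroot j (b i) ≤ 0)
    (Φ : Set V) (hΦfin : Φ.Finite) (hΦroot : ∀ i, b i ∈ Φ)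
    (hΦrefl : ∀ β ∈ Φ, ∀ i, β - coroot i β • b i ∈ Φ)
    (ϖ : Fin r → V)
    (hϖ : ∀ i j : Fin r, coroot j (ϖ i) = if i = j then 1 else 0)
    (j : Fin r) :
    ∀ mu : V, mu ∈ (IP (⇑b) coroot (ϖ j)).extremePoints ℚ ↔
      (mu = ϖ j ∨
        ∃ I : Finset (Fin r), j ∈ I ∧
          ((SimpleGraph.fromRel fun a c : Fin r => coroot c (b a) ≠ 0).induce
            (↑I : Set (Fin r))).Connected ∧
          ∃ c : Fin r → ℚ,
            (∀ k ∈ I, ∑ i ∈ I, c i * coroot k (b i) = if j = k then 1 else 0) ∧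
            mu = ϖ j - ∑ i ∈ I, c i • b i) := by
  obtain ⟨B, hB⟩ := exists_isCorootForm b hdiag hΦfin hΦroot hΦrefl
  have hsum : ∀ (I : Finset (Fin r)) (c : Fin r → ℚ) k,
      ∑ i ∈ I, c i * coroot k (b i) = coroot k (∑ i ∈ I, c i • b i) := fun I c k => by
    simp only [map_sum, map_smul, smul_eq_mul]
  simp_rw [hsum]
  intro mu
  refine ⟨eq_or_exists_of_mem_extremePoints_IP hB hoff (hϖ j), ?_⟩
  rintro (rfl | ⟨I, hj, hconn, c, hc, rfl⟩)
  · exact self_mem_extremePoints_IP fun i => by rw [hϖ]; split_ifs <;> norm_num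
  · exact sub_sum_mem_extremePoints_IP hB hoff (hϖ j) hj hconn hc

/-- Fix an index `j`.  The extreme points (vertices) of `IP_{ϖ_j}` are
exactly: `ϖ_j` itself, together with the points `ϖ_j − Σ_{i ∈ I} c_i α_i`, where `I`
ranges over the connected subsets of `{1, …, r}` containing `j` and `(c_i)_{i ∈ I}` is the
unique tuple of rationals satisfying `Σ_{i ∈ I} c_i ⟨α_i, α_k^∨⟩ = δ_{jk}` for all
`k ∈ I` (the `j`-th column of the inverse transpose of the Cartan matrix on `I`). -/
theorem stmt_16 {V : Type*} [AddCommGroup V] [Module ℚ V] {r : ℕ}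
    (b : Module.Basis (Fin r) ℚ V) (coroot : Fin r → Module.Dual ℚ V)
    (hdiag : ∀ i, coroot i (b i) = 2)
    (hoff : ∀ i j : Fin r, i ≠ j → coroot j (b i) ≤ 0)
    (hint : ∀ i j : Fin r, ∃ n : ℤ, coroot j (b i) = (n : ℚ))
    (Φ : Set V) (hΦfin : Φ.Finite) (hΦroot : ∀ i, b i ∈ Φ)
    (hΦrefl : ∀ β ∈ Φ, ∀ i, β - coroot i β • b i ∈ Φ)
    (ϖ : Fin r → V)
    (hϖ : ∀ i j : Fin r, coroot j (ϖ i) = if i = j then 1 else 0)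
    (j : Fin r) :
    ∀ mu : V, mu ∈ (IP (⇑b) coroot (ϖ j)).extremePoints ℚ ↔
      (mu = ϖ j ∨
        ∃ I : Finset (Fin r), j ∈ I ∧
          ((SimpleGraph.fromRel fun a c : Fin r => coroot c (b a) ≠ 0).induce
            (↑I : Set (Fin r))).Connected ∧
          ∃ c : Fin r → ℚ,
            (∀ k ∈ I, ∑ i ∈ I, c i * coroot k (b i) = if j = k then 1 else 0) ∧
            mu = ϖ j - ∑ i ∈ I, c i • b i) :=
  stmt_16_general b coroot hdiag hoff Φ hΦfin hΦroot hΦrefl ϖ hϖ j
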